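/- arXiv:2311.08575 — 2 statements merged into one kernel-verified Lean document; each statement's English description precedes it below -/
import Mathlib

section
/- Let K ⊆ ℝⁿ be a convex set containing the origin. Then the total convex influence TInf[K] = E_{x∼N(0,Iₙ)}[K(x)·(n − ‖x‖²)] is non-negative. -/
open MeasureTheory ProbabilityTheory Real

/-- The standard Gaussian measure `N(0, Iₙ)` on `ℝⁿ`, defined via its density
`(2π)^{-n/2} e^{-‖x‖²/2}` with respect to Lebesgue measure. -/
noncomputable def stdGaussian (n : ℕ) : Measure (EuclideanSpace ℝ (Fin n)) :=
  volume.withDensity fun x => ENNReal.ofReal ((2 * π) ^ (-(n : ℝ) / 2) * Real.exp (-‖x‖ ^ 2 / 2))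

/-!
Up to the normalising constant, the integral is the derivative at `t = 1` of the Gaussian mass
`t ↦ ∫_{t • K} e^{-‖x‖²/2} dx = ∫_K tⁿ e^{-t²‖x‖²/2} dx`, the second form coming from the change
of variables `x ↦ t • x`. Differentiating the second form under the integral sign gives
`∫_K (n - ‖x‖²) e^{-‖x‖²/2} dx`, while the first form is monotone in `t` because the dilates of a
set star-shaped about the origin increase with `t`.
-/

open Set Module
open scoped Pointwise

lemma StarConvex.smul_subset_smul {𝕜 E : Type*} [Field 𝕜] [LinearOrder 𝕜] [IsStrictOrderedRing 𝕜]
    [AddCommGroup E] [Module 𝕜 E] {K : Set E} (hK : StarConvex 𝕜 0 K) {s t : 𝕜} (hs : 0 < s)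
    (hst : s ≤ t) : s • K ⊆ t • K := by
  have ht : 0 < t := hs.trans_le hst
  rintro _ ⟨x, hx, rfl⟩
  refine ⟨(s / t) • x, hK.smul_mem hx (by positivity) ((div_le_one ht).2 hst), ?_⟩
  simp only [smul_smul, mul_div_cancel₀ _ ht.ne']

lemma hasDerivAt_pow_mul_exp_neg_sq_mul (d : ℕ) (u t : ℝ) :
    HasDerivAt (fun s : ℝ => s ^ d * rexp (-s ^ 2 * u / 2))
      ((d * t ^ (d - 1) - t ^ (d + 1) * u) * rexp (-t ^ 2 * u / 2)) t := by
  have hexp := ((hasDerivAt_pow 2 t).const_mul (-u / 2)).exp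
  have hfun : (fun s : ℝ => rexp (-u / 2 * s ^ 2)) = fun s => rexp (-s ^ 2 * u / 2) := by
    funext s; ring_nf
  rw [hfun] at hexp
  exact ((hasDerivAt_pow d t).mul hexp).congr_deriv (by push_cast; ring_nf)

lemma abs_pow_mul_exp_neg_sq_mul_deriv_le (d : ℕ) {u t : ℝ} (hu : 0 ≤ u)
    (ht : t ∈ Icc (1 / 2 : ℝ) 2) :
    |(d * t ^ (d - 1) - t ^ (d + 1) * u) * rexp (-t ^ 2 * u / 2)|
      ≤ 2 ^ (d + 1) * (d + u) * rexp (-u / 8) := by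
  obtain ⟨ht₁, ht₂⟩ := ht
  have ht₀ : 0 ≤ t := by linarith
  have hpow₁ : t ^ (d - 1) ≤ 2 ^ (d + 1) :=
    (pow_le_pow_left₀ ht₀ ht₂ _).trans (pow_le_pow_right₀ one_le_two (by omega))
  have hpow₂ : t ^ (d + 1) ≤ 2 ^ (d + 1) := pow_le_pow_left₀ ht₀ ht₂ _
  have hcoef : |d * t ^ (d - 1) - t ^ (d + 1) * u| ≤ 2 ^ (d + 1) * (d + u) := by
    rw [abs_le]
    constructor <;>
      nlinarith [pow_nonneg ht₀ (d - 1), pow_nonneg ht₀ (d + 1), d.cast_nonneg (α := ℝ)]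
  have hexp : rexp (-t ^ 2 * u / 2) ≤ rexp (-u / 8) := by
    have ht_sq : 1 / 4 ≤ t ^ 2 := by nlinarith
    exact exp_le_exp.2 (by nlinarith)
  rw [abs_mul, abs_of_pos (exp_pos _)]
  exact mul_le_mul hcoef hexp (exp_pos _).le (by positivity)

variable {E : Type*} [NormedAddCommGroup E] [InnerProductSpace ℝ E] [FiniteDimensional ℝ E]
  [MeasurableSpace E] [BorelSpace E] (μ : Measure E) [μ.IsAddHaarMeasure]

lemma integrable_exp_neg_mul_sq_norm {b : ℝ} (hb : 0 < b) :
    Integrable (fun x : E => rexp (-b * ‖x‖ ^ 2)) μ := by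
  have hvol : Integrable (fun x : E => rexp (-b * ‖x‖ ^ 2)) := by
    refine (GaussianFourier.integrable_cexp_neg_mul_sq_norm_add (V := E) (b := b)
      (by simpa using hb) 0 0).norm.congr (.of_forall fun x => ?_)
    simp [Complex.norm_exp, ← Complex.ofReal_pow]
  rw [Measure.isAddLeftInvariant_eq_smul μ volume]
  exact hvol.smul_measure ENNReal.coe_ne_top

lemma integrable_sq_norm_mul_exp_neg_mul_sq_norm {b : ℝ} (hb : 0 < b) :
    Integrable (fun x : E => ‖x‖ ^ 2 * rexp (-b * ‖x‖ ^ 2)) μ := by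
  refine ((integrable_exp_neg_mul_sq_norm μ (half_pos hb)).const_mul (2 / b)).mono'
    (by fun_prop) (.of_forall fun x => ?_)
  -- `u ≤ (2 / b) exp (b u / 2)` trades the factor `u = ‖x‖²` for half of the Gaussian decay
  set u := ‖x‖ ^ 2
  have hu : u ≤ 2 / b * rexp (b * u / 2) := by
    rw [div_mul_eq_mul_div, le_div_iff₀ hb]
    linarith [add_one_le_exp (b * u / 2)]
  rw [norm_of_nonneg (by positivity)]
  calc u * rexp (-b * u) ≤ 2 / b * rexp (b * u / 2) * rexp (-b * u) := by gcongr
    _ = 2 / b * rexp (-(b / 2) * u) := by rw [mul_assoc, ← exp_add]; ring_nf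

lemma setIntegral_smul_set_exp_neg_sq_norm (K : Set E) {t : ℝ} (ht : 0 < t) :
    ∫ x in t • K, rexp (-‖x‖ ^ 2 / 2) ∂μ
      = ∫ x in K, t ^ finrank ℝ E * rexp (-t ^ 2 * ‖x‖ ^ 2 / 2) ∂μ := by
  have hnorm (x : E) : -‖t • x‖ ^ 2 / 2 = -t ^ 2 * ‖x‖ ^ 2 / 2 := by
    rw [norm_smul, norm_of_nonneg ht.le]; ring
  simp_rw [integral_const_mul, ← hnorm,
    Measure.setIntegral_comp_smul μ (fun x => rexp (-‖x‖ ^ 2 / 2)) K ht.ne', smul_eq_mul,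
    ← mul_assoc, abs_of_pos (inv_pos.2 (pow_pos ht _)), mul_inv_cancel₀ (pow_pos ht _).ne',
    one_mul]

lemma hasDerivAt_setIntegral_pow_mul_exp_neg_sq_mul_sq_norm (K : Set E) :
    HasDerivAt (fun t => ∫ x in K, t ^ finrank ℝ E * rexp (-t ^ 2 * ‖x‖ ^ 2 / 2) ∂μ)
      (∫ x in K, (finrank ℝ E - ‖x‖ ^ 2) * rexp (-‖x‖ ^ 2 / 2) ∂μ) 1 := by
  set d := finrank ℝ E
  have hint : Integrable (fun x : E => (1 : ℝ) ^ d * rexp (-1 ^ 2 * ‖x‖ ^ 2 / 2)) (μ.restrict K) :=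
    (integrable_exp_neg_mul_sq_norm μ (b := 1 / 2) (by norm_num)).restrict.congr
      (.of_forall fun x => by simp only [one_pow, one_mul]; ring_nf)
  have hbound : Integrable (fun x : E => 2 ^ (d + 1) * (d + ‖x‖ ^ 2) * rexp (-‖x‖ ^ 2 / 8))
      (μ.restrict K) := by
    have := ((integrable_exp_neg_mul_sq_norm μ (b := 1 / 8) (by norm_num)).const_mul d).add
      (integrable_sq_norm_mul_exp_neg_mul_sq_norm μ (b := 1 / 8) (by norm_num))
    refine (this.const_mul (2 ^ (d + 1))).restrict.congr (.of_forall fun x => ?_)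
    simp only [Pi.add_apply]; ring_nf
  have key := hasDerivAt_integral_of_dominated_loc_of_deriv_le (μ := μ.restrict K) (x₀ := (1 : ℝ))
    (F' := fun t x => (d * t ^ (d - 1) - t ^ (d + 1) * ‖x‖ ^ 2) * rexp (-t ^ 2 * ‖x‖ ^ 2 / 2))
    (Icc_mem_nhds (by norm_num : (1 / 2 : ℝ) < 1) (by norm_num : (1 : ℝ) < 2))
    (.of_forall fun t => by fun_prop) hint (by fun_prop)
    (.of_forall fun x t ht => abs_pow_mul_exp_neg_sq_mul_deriv_le d (by positivity) ht) hbound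
    (.of_forall fun x t _ => hasDerivAt_pow_mul_exp_neg_sq_mul d _ t)
  simpa using key.2

theorem StarConvex.setIntegral_sub_sq_norm_mul_exp_nonneg {K : Set E} (hK : StarConvex ℝ 0 K) :
    0 ≤ ∫ x in K, (finrank ℝ E - ‖x‖ ^ 2) * rexp (-‖x‖ ^ 2 / 2) ∂μ := by
  have hmono : MonotoneOn
      (fun t => ∫ x in K, t ^ finrank ℝ E * rexp (-t ^ 2 * ‖x‖ ^ 2 / 2) ∂μ) (Ioi 0) := by
    intro s hs t ht hst
    simp only [← setIntegral_smul_set_exp_neg_sq_norm μ K hs,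
      ← setIntegral_smul_set_exp_neg_sq_norm μ K ht]
    refine setIntegral_mono_set ?_ (.of_forall fun x => (exp_pos _).le)
      (.of_forall (hK.smul_subset_smul hs hst))
    exact ((integrable_exp_neg_mul_sq_norm μ (b := 1 / 2) (by norm_num)).congr
      (.of_forall fun x => by ring_nf)).integrableOn
  exact (hasDerivAt_setIntegral_pow_mul_exp_neg_sq_mul_sq_norm μ K).hasDerivWithinAt
    |>.nonneg_of_monotoneOn (isOpen_Ioi.preperfect 1 one_pos) hmono

lemma integral_stdGaussian (n : ℕ) (f : EuclideanSpace ℝ (Fin n) → ℝ) :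
    ∫ x, f x ∂stdGaussian n = (2 * π) ^ (-(n : ℝ) / 2) * ∫ x, f x * rexp (-‖x‖ ^ 2 / 2) := by
  rw [_root_.stdGaussian, integral_withDensity_eq_integral_toReal_smul (by fun_prop)
    (.of_forall fun _ => ENNReal.ofReal_lt_top), ← integral_const_mul]
  congr 1 with x
  rw [ENNReal.toReal_ofReal (by positivity), smul_eq_mul]
  ring

/-- The total convex influence of a convex set containing the origin is non-negative. -/
theorem tinf_nonneg (n : ℕ) (K : Set (EuclideanSpace ℝ (Fin n))) (hK : Convex ℝ K)
    (h0 : (0 : EuclideanSpace ℝ (Fin n)) ∈ K) :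
    0 ≤ ∫ x, Set.indicator K (fun x => (n : ℝ) - ‖x‖ ^ 2) x ∂stdGaussian n := by
  simp_rw [integral_stdGaussian,
    ← indicator_mul_left K _ fun x : EuclideanSpace ℝ (Fin n) => rexp (-‖x‖ ^ 2 / 2)]
  rw [integral_indicator₀ (hK.nullMeasurableSet (μ := volume))]
  have hK0 := (hK.starConvex h0).setIntegral_sub_sq_norm_mul_exp_nonneg volume
  rw [finrank_euclideanSpace_fin] at hK0
  exact mul_nonneg (by positivity) hK0
end

section
/- Let H = {x ∈ ℝⁿ : ⟨x, v⟩ ≤ θ} be a halfspace with unit normal v and θ ≥ 0, containing the origin. Then TInf[H] := E_{x∼N(0,Iₙ)}[1_H(x)·(n − ‖x‖²)] = θ·φ(θ), where φ is the standard univariate Gaussian density. -/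
/-!
The density measure `stdGaussian n` has characteristic function `exp (-‖t‖² / 2)`, so it is
Mathlib's standard Gaussian, whose coordinates in any orthonormal basis are i.i.d. `N(0, 1)`.
Take an orthonormal basis `b` with `b i₀ = v` and write `n - ‖x‖² = ∑ᵢ (1 - ⟪x, bᵢ⟫²)`. For
`i ≠ i₀` the term `1_{x_{i₀} ≤ θ} (1 - xᵢ²)` has mean `P(g ≤ θ) · E[1 - g²] = 0` by
independence. The term `i = i₀` is one-dimensional, and
`∫_{-∞}^θ (1 - t²) φ(t) dt = θ φ(θ)` because `(t φ(t))' = (1 - t²) φ(t)`.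
-/

open MeasureTheory ProbabilityTheory Real

open Set Filter Topology

section GaussianIntegral

variable {V : Type*} [NormedAddCommGroup V] [InnerProductSpace ℝ V] [FiniteDimensional ℝ V]
  [MeasurableSpace V] [BorelSpace V]

lemma integral_exp_neg_sq_norm_div_two :
    ∫ x : V, rexp (-‖x‖ ^ 2 / 2) = (2 * π) ^ ((Module.finrank ℝ V : ℝ) / 2) := by
  convert GaussianFourier.integral_rexp_neg_mul_sq_norm (V := V) (b := 1 / 2) (by norm_num)
    using 3 with x
  · congr 1
    ring
  · ring

lemma integral_exp_neg_sq_norm_div_two_smul_cexp_inner (t : V) :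
    ∫ x : V, rexp (-‖x‖ ^ 2 / 2) • Complex.exp (inner ℝ x t * Complex.I)
      = (2 * π : ℂ) ^ ((Module.finrank ℝ V : ℂ) / 2) * Complex.exp (-‖t‖ ^ 2 / 2) := by
  convert GaussianFourier.integral_cexp_neg_mul_sq_norm_add (V := V) (b := 1 / 2)
    (by norm_num) Complex.I t using 2
  · funext x
    rw [Complex.real_smul, Complex.ofReal_exp, ← Complex.exp_add, real_inner_comm]
    push_cast
    ring_nf
  · congr 1
    ring
  · rw [Complex.I_sq]
    ring_nf

end GaussianIntegral

lemma rpow_neg_half_mul_rpow_half {a : ℝ} (ha : 0 < a) (s : ℝ) :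
    a ^ (-s / 2) * a ^ (s / 2) = 1 := by
  rw [← rpow_add ha, neg_div, neg_add_cancel, rpow_zero]

theorem stdGaussian_eq_probabilityTheory_stdGaussian (n : ℕ) :
    _root_.stdGaussian n = ProbabilityTheory.stdGaussian (EuclideanSpace ℝ (Fin n)) := by
  have hdensity : Integrable fun x : EuclideanSpace ℝ (Fin n) =>
      (2 * π) ^ (-(n : ℝ) / 2) * rexp (-‖x‖ ^ 2 / 2) := by
    refine (Integrable.of_integral_ne_zero ?_).const_mul _
    rw [integral_exp_neg_sq_norm_div_two]
    positivity
  have : IsFiniteMeasure (_root_.stdGaussian n) := isFiniteMeasure_withDensity_ofReal hdensity.2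
  refine Measure.ext_of_charFun (funext fun t => ?_)
  rw [charFun_stdGaussian, charFun_apply, _root_.stdGaussian,
    integral_withDensity_eq_integral_toReal_smul (by fun_prop)
      (ae_of_all _ fun _ => ENNReal.ofReal_lt_top)]
  simp_rw [ENNReal.toReal_ofReal (by positivity : (0 : ℝ) ≤ (2 * π) ^ (-(n : ℝ) / 2) * rexp _),
    mul_smul, integral_smul, integral_exp_neg_sq_norm_div_two_smul_cexp_inner,
    finrank_euclideanSpace_fin, ← smul_mul_assoc]
  have hcast : ((2 * π : ℝ) : ℂ) ^ (((n : ℝ) / 2 : ℝ) : ℂ) = (2 * π : ℂ) ^ ((n : ℂ) / 2) := by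
    push_cast
    rfl
  rw [← hcast, ← Complex.ofReal_cpow (by positivity), Complex.real_smul, ← Complex.ofReal_mul,
    rpow_neg_half_mul_rpow_half (by positivity), Complex.ofReal_one, one_mul]

lemma gaussianPDFReal_zero_one (t : ℝ) :
    gaussianPDFReal 0 1 t = (2 * π) ^ (-(1 : ℝ) / 2) * rexp (-t ^ 2 / 2) := by
  rw [gaussianPDFReal, sqrt_eq_rpow, ← rpow_neg (by positivity)]
  norm_num

lemma hasDerivAt_mul_gaussianPDFReal (t : ℝ) :
    HasDerivAt (fun s => s * gaussianPDFReal 0 1 s) ((1 - t ^ 2) * gaussianPDFReal 0 1 t) t := by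
  simp only [gaussianPDFReal_zero_one]
  have hexponent : HasDerivAt (fun s : ℝ => -s ^ 2 / 2) (-t) t :=
    ((hasDerivAt_pow 2 t).fun_neg.div_const 2).congr_deriv (by push_cast; ring)
  exact ((hasDerivAt_id' t).fun_mul (hexponent.exp.const_mul _)).congr_deriv (by ring)

lemma integrable_pow_gaussianReal {μ : ℝ} {v : NNReal} (k : ℕ) :
    Integrable (fun t : ℝ => t ^ k) (gaussianReal μ v) :=
  integrable_pow_of_integrable_exp_mul one_ne_zero (integrable_exp_mul_gaussianReal 1)
    (integrable_exp_mul_gaussianReal (-1)) k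

lemma integrable_pow_mul_gaussianPDFReal (k : ℕ) :
    Integrable fun t => t ^ k * gaussianPDFReal 0 1 t := by
  have hk := integrable_pow_gaussianReal (μ := 0) (v := 1) k
  rw [gaussianReal_of_var_ne_zero 0 one_ne_zero, integrable_withDensity_iff
    (measurable_gaussianPDF 0 1) (ae_of_all _ fun _ => gaussianPDF_lt_top)] at hk
  simpa [gaussianPDF, gaussianPDFReal_nonneg] using hk

lemma setIntegral_Iic_one_sub_sq_mul_gaussianPDFReal (θ : ℝ) :
    ∫ t in Iic θ, (1 - t ^ 2) * gaussianPDFReal 0 1 t = θ * gaussianPDFReal 0 1 θ := by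
  have hderiv : ∀ t ∈ Iic θ, HasDerivAt (fun s => s * gaussianPDFReal 0 1 s)
      ((1 - t ^ 2) * gaussianPDFReal 0 1 t) t := fun t _ => hasDerivAt_mul_gaussianPDFReal t
  have hint : Integrable fun t => (1 - t ^ 2) * gaussianPDFReal 0 1 t := by
    refine ((integrable_pow_mul_gaussianPDFReal 0).sub
      (integrable_pow_mul_gaussianPDFReal 2)).congr (ae_of_all _ fun t => ?_)
    simp [sub_mul]
  have hlim : Tendsto (fun s => s * gaussianPDFReal 0 1 s) atBot (𝓝 0) :=
    tendsto_zero_of_hasDerivAt_of_integrableOn_Iic hderiv hint.integrableOn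
      (by simpa using (integrable_pow_mul_gaussianPDFReal 1).integrableOn)
  simpa using integral_Iic_of_hasDerivAt_of_tendsto' hderiv hint.integrableOn hlim

lemma integral_indicator_Iic_one_sub_sq_gaussianReal (θ : ℝ) :
    ∫ t, (Iic θ).indicator (fun t => 1 - t ^ 2) t ∂gaussianReal 0 1
      = θ * gaussianPDFReal 0 1 θ := by
  rw [integral_gaussianReal_eq_integral_smul one_ne_zero,
    ← setIntegral_Iic_one_sub_sq_mul_gaussianPDFReal, ← integral_indicator measurableSet_Iic]
  congr with t
  by_cases ht : t ∈ Iic θ <;> simp [ht, mul_comm]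

lemma integral_one_sub_sq_gaussianReal : ∫ t, 1 - t ^ 2 ∂gaussianReal 0 1 = 0 := by
  have hsecond : ∫ t, t ^ 2 ∂gaussianReal 0 1 = 1 := by
    simpa [variance_eq_integral aemeasurable_id'] using
      variance_fun_id_gaussianReal (μ := 0) (v := 1)
  rw [integral_sub (integrable_const 1) (integrable_pow_gaussianReal 2), hsecond]
  simp

section PiGaussian

variable {ι : Type*} [Fintype ι]

lemma integrable_one_sub_sq_pi_gaussianReal (i : ι) :
    Integrable (fun x : ι → ℝ => 1 - x i ^ 2) (Measure.pi fun _ => gaussianReal 0 1) :=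
  integrable_comp_eval (μ := fun _ => gaussianReal 0 1) (f := fun t => 1 - t ^ 2)
    ((integrable_const 1).sub (integrable_pow_gaussianReal 2))

lemma integral_indicator_one_sub_sq_pi_gaussianReal [DecidableEq ι] (θ : ℝ) (k i : ι) :
    ∫ x, {x : ι → ℝ | x k ≤ θ}.indicator (fun x => 1 - x i ^ 2) x
        ∂Measure.pi (fun _ => gaussianReal 0 1)
      = if i = k then θ * gaussianPDFReal 0 1 θ else 0 := by
  split_ifs with hik
  · subst hik
    rw [← integral_indicator_Iic_one_sub_sq_gaussianReal,
      ← integral_comp_eval (μ := fun _ => gaussianReal 0 1) (i := i)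
        (f := (Iic θ).indicator fun t => 1 - t ^ 2)
        ((by fun_prop : Measurable fun t : ℝ => 1 - t ^ 2).indicator
          measurableSet_Iic).aestronglyMeasurable]
    rfl
  · have hindep : IndepFun (fun x : ι → ℝ => x k) (fun x => x i)
        (Measure.pi fun _ => gaussianReal 0 1) :=
      (iIndepFun_pi (X := fun _ => id) fun _ => aemeasurable_id).indepFun (Ne.symm hik)
    calc _ = ∫ x, (Iic θ).indicator 1 (x k) * (1 - x i ^ 2)
          ∂Measure.pi (fun _ => gaussianReal 0 1) := by
          congr with x
          by_cases hx : x k ≤ θ <;> simp [hx]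
      _ = 0 := by
        rw [hindep.integral_fun_comp_mul_comp (f := (Iic θ).indicator 1)
          (g := fun t => 1 - t ^ 2)
          (measurable_pi_apply k).aemeasurable (measurable_pi_apply i).aemeasurable
          (measurable_one.indicator measurableSet_Iic).aestronglyMeasurable
          (by fun_prop : Measurable fun t : ℝ => 1 - t ^ 2).aestronglyMeasurable,
          integral_comp_eval (μ := fun _ => gaussianReal 0 1) (f := fun t => 1 - t ^ 2)
            (by fun_prop), integral_one_sub_sq_gaussianReal, mul_zero]

end PiGaussian

lemma exists_orthonormalBasis_apply_eq {𝕜 E ι : Type*} [RCLike 𝕜]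
    [NormedAddCommGroup E] [InnerProductSpace 𝕜 E] [FiniteDimensional 𝕜 E] [Fintype ι]
    (h : Module.finrank 𝕜 E = Fintype.card ι) {v : E} (hv : ‖v‖ = 1) (i : ι) :
    ∃ b : OrthonormalBasis ι 𝕜 E, b i = v := by
  have hon : Orthonormal 𝕜 (({i} : Set ι).domRestrict fun _ => v) := by
    rw [orthonormal_iff_ite]
    rintro ⟨j, rfl⟩ ⟨k, rfl⟩
    simp [Set.domRestrict_apply, inner_self_eq_norm_sq_to_K, hv]
  obtain ⟨b, hb⟩ := hon.exists_orthonormalBasis_extension_of_card_eq h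
  exact ⟨b, hb i rfl⟩

theorem tinf_halfspace_general (n : ℕ) (v : EuclideanSpace ℝ (Fin n)) (hv : ‖v‖ = 1)
    (θ : ℝ) :
    ∫ x, Set.indicator {y : EuclideanSpace ℝ (Fin n) | (inner ℝ y v : ℝ) ≤ θ}
        (fun x => (n : ℝ) - ‖x‖ ^ 2) x ∂stdGaussian n
      = θ * ((2 * π) ^ (-(1 : ℝ) / 2) * Real.exp (-θ ^ 2 / 2)) := by
  obtain ⟨i₀⟩ : Nonempty (Fin n) := by
    refine Fin.pos_iff_nonempty.mp (Nat.pos_of_ne_zero fun hn => ?_)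
    subst hn
    simp [Subsingleton.elim v 0] at hv
  obtain ⟨b, rfl⟩ := exists_orthonormalBasis_apply_eq (𝕜 := ℝ) (by simp) hv i₀
  have hcoord (x : Fin n → ℝ) (i : Fin n) : inner ℝ (∑ j, x j • b j) (b i) = x i := by
    simpa using b.orthonormal.inner_left_sum x (Finset.mem_univ i)
  have hdecomp (x : Fin n → ℝ) :
      {y | inner ℝ y (b i₀) ≤ θ}.indicator (fun y => (n : ℝ) - ‖y‖ ^ 2) (∑ j, x j • b j)
        = ∑ i, {x : Fin n → ℝ | x i₀ ≤ θ}.indicator (fun x => 1 - x i ^ 2) x := by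
    simp only [indicator_apply, mem_ofPred_eq, hcoord, ← b.sum_sq_inner_left]
    split_ifs <;> simp
  rw [stdGaussian_eq_probabilityTheory_stdGaussian, stdGaussian_eq_map_pi_orthonormalBasis b,
    integral_map (Measurable.aemeasurable (by fun_prop))
      (Measurable.indicator (by fun_prop)
        (measurableSet_le (by fun_prop) measurable_const)).aestronglyMeasurable]
  simp_rw [hdecomp]
  rw [integral_finsetSum _ fun i _ => (integrable_one_sub_sq_pi_gaussianReal i).indicator
    (measurableSet_le (measurable_pi_apply i₀) measurable_const)]
  simp_rw [integral_indicator_one_sub_sq_pi_gaussianReal, Finset.sum_ite_eq', Finset.mem_univ,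
    if_true, gaussianPDFReal_zero_one]

/-- The total convex influence of the halfspace `{x : ⟨x, v⟩ ≤ θ}` (with `‖v‖ = 1`, `θ ≥ 0`)
equals `θ·φ(θ)`. -/
theorem tinf_halfspace (n : ℕ) (v : EuclideanSpace ℝ (Fin n)) (hv : ‖v‖ = 1)
    (θ : ℝ) (hθ : 0 ≤ θ) :
    ∫ x, Set.indicator {y : EuclideanSpace ℝ (Fin n) | (inner ℝ y v : ℝ) ≤ θ}
        (fun x => (n : ℝ) - ‖x‖ ^ 2) x ∂stdGaussian n
      = θ * ((2 * π) ^ (-(1 : ℝ) / 2) * Real.exp (-θ ^ 2 / 2)) :=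
  tinf_halfspace_general n v hv θ
end
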